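/- arXiv:2208.04768 — 2 statements merged into one kernel-verified Lean document; each statement's English description precedes it below -/
import Mathlib

section
/- Let F be a field, N an F[x]-module, and M₀, M₁ ⊆ N two F[x]-submodules whose torsion orders O₀ = Ord(M₀) and O₁ = Ord(M₁) exist. If O₁ < O₀ and there is a natural number M with x^M·M₁ = x^M·M₀ (equality of submodules of N), then M ≥ O₀. -/
open Polynomial Pointwise

/-- For an `F[x]`-module (here presented as a submodule `M` of an ambient `F[x]`-module `N`),
`HasTorsionOrder F M m` says that `m` is the least natural number such that `x^m` annihilates
every `x`-power-torsion element of `M`, i.e. the torsion order `Ord(M)` exists and equals `m`. -/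
def HasTorsionOrder (F : Type*) [Field F] {N : Type*} [AddCommGroup N]
    [Module (Polynomial F) N] (M : Submodule (Polynomial F) N) (m : ℕ) : Prop :=
  IsLeast {m : ℕ | ∀ c ∈ M, (∃ j : ℕ, (X : Polynomial F) ^ j • c = 0) →
    (X : Polynomial F) ^ m • c = 0} m

/-- If `M₀, M₁` are submodules of an `F[x]`-module `N` with torsion orders `O₀ > O₁`,
and `x^M • M₁ = x^M • M₀` for some natural number `M`, then `M ≥ O₀`. -/
theorem ge_torsionOrder_of_pow_smul_eq {F : Type*} [Field F] {N : Type*} [AddCommGroup N]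
    [Module (Polynomial F) N] (M₀ M₁ : Submodule (Polynomial F) N) (O₀ O₁ : ℕ)
    (h₀ : HasTorsionOrder F M₀ O₀) (h₁ : HasTorsionOrder F M₁ O₁)
    (hlt : O₁ < O₀) (M : ℕ)
    (heq : (X : Polynomial F) ^ M • M₁ = (X : Polynomial F) ^ M • M₀) :
    M ≥ O₀ := by
  by_contra hM
  push_neg at hM
  obtain ⟨h₀mem, h₀least⟩ := h₀
  obtain ⟨h₁mem, _⟩ := h₁
  have hnot : ¬ (∀ c ∈ M₀, (∃ j : ℕ, (X : Polynomial F) ^ j • c = 0) →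
      (X : Polynomial F) ^ (O₀ - 1) • c = 0) := by
    intro h
    have := h₀least h
    omega
  push_neg at hnot
  obtain ⟨c, hc, hct, hcne⟩ := hnot
  have hmem : (X : Polynomial F) ^ M • c ∈ (X : Polynomial F) ^ M • M₁ := by
    rw [heq]; exact Submodule.smul_mem_pointwise_smul c _ M₀ hc
  have hmem' : (X : Polynomial F) ^ M • c ∈ (X : Polynomial F) ^ M • (M₁ : Set N) := by
    rwa [← Submodule.coe_pointwise_smul]
  obtain ⟨d, hd, hdc⟩ := Set.mem_smul_set.mp hmem'
  have hcO₀ : (X : Polynomial F) ^ O₀ • c = 0 := h₀mem c hc hct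
  have hdt : (X : Polynomial F) ^ O₀ • d = 0 := by
    have h : (X : Polynomial F) ^ (O₀ - M) • ((X : Polynomial F) ^ M • d) = 0 := by
      rw [hdc, smul_smul, ← pow_add]
      have hOM : O₀ - M + M = O₀ := by omega
      rw [hOM]; exact hcO₀
    rwa [smul_smul, ← pow_add, Nat.sub_add_cancel (le_of_lt hM)] at h
  have hdO₁ : (X : Polynomial F) ^ O₁ • d = 0 := h₁mem d hd ⟨O₀, hdt⟩
  apply hcne
  have e1 : O₀ - 1 = O₀ - 1 - M + M := by omega
  have e2 : O₀ - 1 = O₀ - 1 - O₁ + O₁ := by omega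
  calc (X : Polynomial F) ^ (O₀ - 1) • c
      = (X : Polynomial F) ^ (O₀ - 1 - M) • ((X : Polynomial F) ^ M • c) := by
        rw [smul_smul, ← pow_add, ← e1]
    _ = (X : Polynomial F) ^ (O₀ - 1 - M) • ((X : Polynomial F) ^ M • d) := by rw [hdc]
    _ = (X : Polynomial F) ^ (O₀ - 1 - O₁) • ((X : Polynomial F) ^ O₁ • d) := by
        rw [smul_smul, ← pow_add, ← e1, smul_smul, ← pow_add, ← e2]
    _ = 0 := by rw [hdO₁, smul_zero]
end

section
/- Let F = 𝔽₂, let a₁, a₂ be real numbers, and let ε₁ ≥ ε₂ > 0 be real numbers. Let C be the 4-dimensional F-vector space with basis e₁, e₂, e₃, e₄, assigned filtration levels ℓ(e₁) = a₁ + a₂ + ε₁ + ε₂, ℓ(e₂) = a₁ + a₂ + ε₁, ℓ(e₃) = a₁ + a₂ + ε₂, ℓ(e₄) = a₁ + a₂, and for each s ∈ ℝ define the increasing filtration F_s to be the F-span of {e_i : ℓ(e_i) ≤ s}. Let ∂ : C → C be the F-linear map with ∂e₁ = e₂ + e₃, ∂e₂ = e₄, ∂e₃ = e₄, ∂e₄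 = 0 (so ∂ ∘ ∂ = 0 and ∂(F_s) ⊆ F_s for all s). Then there exists a basis f₁, f₂, f₃, f₄ of C such that: (i) for every s ∈ ℝ, F_s equals the F-span of {f_i : ℓ(e_i) ≤ s} (i.e. the change of basis is filtered, with f_i having filtration level ℓ(e_i)); (ii) ∂f₁ = f₂ and ∂f₃ = f₄; and (iii) the filtration-level gaps satisfy ℓ(e₁) − ℓ(e₂) = ε₂ and ℓ(e₃) − ℓ(e₄) = ε₂. Consequently C splits as a direct sum of the two filtered two-term subcomplexes span{f₁, f₂} and span{f₃, f₄}, each of the form X → Y with filtration gap ε₂ = min(ε₁, ε₂). -/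
/-!
Over `𝔽₂` the differential sends `e 1 + e 2` to `e 3 + e 3 = 0`, so replacing `e 1` by
`f 1 = e 1 + e 2` turns `d` into the direct sum of `e 0 ↦ f 1` and `e 2 ↦ e 3`. Because
`ε₂ ≤ ε₁`, the added vector `e 2` sits at a level no higher than `e 1`, so this elementary
change of basis preserves every filtration level and is therefore a filtered isomorphism.
-/

open Submodule

namespace Module.Basis

variable {ι R M : Type*} [Ring R] [AddCommGroup M] [Module R M]

noncomputable def addSMul (e : Basis ι R M) {i j : ι} (hij : i ≠ j) (c : R) : Basis ι R M :=
  e.map (LinearEquiv.transvection (f := e.coord i) (v := c • e j) (by simp [hij]))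

variable (e : Basis ι R M) {i j : ι} (hij : i ≠ j) (c : R)

theorem addSMul_apply_self : e.addSMul hij c i = e i + c • e j := by
  simp [addSMul, LinearMap.transvection.apply]

theorem addSMul_apply_of_ne {k : ι} (hk : k ≠ i) : e.addSMul hij c k = e k := by
  simp [addSMul, LinearMap.transvection.apply, hk]

theorem addSMul_addSMul_neg : (e.addSMul hij c).addSMul hij (-c) = e := by
  refine eq_of_apply_eq fun k => ?_
  rcases eq_or_ne k i with rfl | hk
  · rw [addSMul_apply_self, addSMul_apply_self, addSMul_apply_of_ne _ _ _ hij.symm]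
    simp
  · rw [addSMul_apply_of_ne _ _ _ hk, addSMul_apply_of_ne _ _ _ hk]

variable {α : Type*} [Preorder α] (ℓ : ι → α)

theorem span_image_le_span_image {b b' : ι → M}
    (h : ∀ k, b k ∈ span R (b' '' {m | ℓ m ≤ ℓ k})) (s : α) :
    span R (b '' {k | ℓ k ≤ s}) ≤ span R (b' '' {k | ℓ k ≤ s}) := by
  rw [span_le]
  rintro _ ⟨k, hk, rfl⟩
  exact span_mono (Set.image_mono fun m hm => le_trans hm hk) (h k)

variable {ℓ}

theorem addSMul_mem_span_image (hℓ : ℓ j ≤ ℓ i) (k : ι) :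
    e.addSMul hij c k ∈ span R (e '' {m | ℓ m ≤ ℓ k}) := by
  rcases eq_or_ne k i with rfl | hk
  · rw [addSMul_apply_self]
    exact add_mem (subset_span ⟨k, le_rfl, rfl⟩) (smul_mem _ _ (subset_span ⟨j, hℓ, rfl⟩))
  · rw [addSMul_apply_of_ne _ _ _ hk]
    exact subset_span ⟨k, le_rfl, rfl⟩

theorem span_addSMul_image (hℓ : ℓ j ≤ ℓ i) (s : α) :
    span R (e.addSMul hij c '' {k | ℓ k ≤ s}) = span R (e '' {k | ℓ k ≤ s}) := by
  refine le_antisymm (span_image_le_span_image ℓ (e.addSMul_mem_span_image hij c hℓ) s) ?_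
  have h := span_image_le_span_image ℓ
    ((e.addSMul hij c).addSMul_mem_span_image hij (-c) hℓ) s
  rwa [addSMul_addSMul_neg] at h

end Module.Basis

theorem LinearMap.apply_mem_span_pair {R M : Type*} [Semiring R] [AddCommMonoid M] [Module R M]
    {d : M →ₗ[R] M} {x y : M} (hx : d x = y) (hy : d y = 0) :
    ∀ c ∈ span R {x, y}, d c ∈ span R {x, y} := by
  have h : map d (span R {x, y}) ≤ span R {x, y} := by
    rw [map_span_le]
    rintro m (rfl | rfl)
    · exact hx ▸ subset_span (Set.mem_insert_of_mem _ rfl)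
    · exact hy ▸ zero_mem _
  exact fun c hc => h (mem_map_of_mem hc)

theorem tensor_of_two_step_complexes_general
    {V : Type*} [AddCommGroup V] [Module (ZMod 2) V]
    (a₁ a₂ ε₁ ε₂ : ℝ) (hε : ε₂ ≤ ε₁)
    (e : Module.Basis (Fin 4) (ZMod 2) V)
    (ℓ : Fin 4 → ℝ)
    (hℓ : ℓ = ![a₁ + a₂ + ε₁ + ε₂, a₁ + a₂ + ε₁, a₁ + a₂ + ε₂, a₁ + a₂])
    (Filt : ℝ → Submodule (ZMod 2) V)
    (hFilt : ∀ s : ℝ, Filt s = Submodule.span (ZMod 2) (⇑e '' {i : Fin 4 | ℓ i ≤ s}))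
    (d : V →ₗ[ZMod 2] V)
    (hd0 : d (e 0) = e 1 + e 2) (hd1 : d (e 1) = e 3)
    (hd2 : d (e 2) = e 3) (hd3 : d (e 3) = 0) :
    ∃ f : Module.Basis (Fin 4) (ZMod 2) V,
      -- (i) the change of basis is filtered, `f i` having filtration level `ℓ i`
      (∀ s : ℝ, Filt s = Submodule.span (ZMod 2) (⇑f '' {i : Fin 4 | ℓ i ≤ s})) ∧
      -- (ii) the differential pairs up the new basis
      d (f 0) = f 1 ∧ d (f 2) = f 3 ∧
      -- (iii) the filtration-level gaps both equal `ε₂ = min ε₁ ε₂`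
      ℓ 0 - ℓ 1 = ε₂ ∧ ℓ 2 - ℓ 3 = ε₂ ∧ ε₂ = min ε₁ ε₂ ∧
      -- consequently, `V` splits as a direct sum of two `d`-invariant two-term
      -- filtered subcomplexes
      IsCompl (Submodule.span (ZMod 2) {f 0, f 1})
        (Submodule.span (ZMod 2) {f 2, f 3}) ∧
      (∀ c ∈ Submodule.span (ZMod 2) ({f 0, f 1} : Set V),
        d c ∈ Submodule.span (ZMod 2) ({f 0, f 1} : Set V)) ∧
      (∀ c ∈ Submodule.span (ZMod 2) ({f 2, f 3} : Set V),
        d c ∈ Submodule.span (ZMod 2) ({f 2, f 3} : Set V)) := by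
  set f := e.addSMul (i := 1) (j := 2) (by decide) 1
  have hf0 : f 0 = e 0 := e.addSMul_apply_of_ne _ _ (by decide)
  have hf1 : f 1 = e 1 + e 2 := by rw [e.addSMul_apply_self, one_smul]
  have hf2 : f 2 = e 2 := e.addSMul_apply_of_ne _ _ (by decide)
  have hf3 : f 3 = e 3 := e.addSMul_apply_of_ne _ _ (by decide)
  have hℓ21 : ℓ 2 ≤ ℓ 1 := by simp [hℓ, hε]
  have hsplit : IsCompl ({0, 1} : Set (Fin 4)) {2, 3} := by
    rw [show ({2, 3} : Set (Fin 4)) = {0, 1}ᶜ by ext i; fin_cases i <;> simp]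
    exact isCompl_compl
  refine ⟨f, fun s => (hFilt s).trans (e.span_addSMul_image _ _ hℓ21 s).symm,
    by rw [hf0, hd0, hf1], by rw [hf2, hd2, hf3], by simp [hℓ], by simp [hℓ],
    (min_eq_right hε).symm, ?_, ?_, ?_⟩
  · simpa only [Set.image_pair] using
      f.linearIndependent.isCompl_span_image f.span_eq hsplit
  · refine LinearMap.apply_mem_span_pair (by rw [hf0, hd0, hf1]) ?_
    rw [hf1, map_add, hd1, hd2, ZModModule.add_self]
  · exact LinearMap.apply_mem_span_pair (by rw [hf2, hd2, hf3]) (by rw [hf3, hd3])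

/-- **Tensor product of two filtered two-term complexes over `𝔽₂`.**

Let `V` be a four-dimensional `𝔽₂`-vector space with basis `e 0, e 1, e 2, e 3` at
filtration levels `a₁ + a₂ + ε₁ + ε₂`, `a₁ + a₂ + ε₁`, `a₁ + a₂ + ε₂`, `a₁ + a₂`
respectively (where `ε₁ ≥ ε₂ > 0`), with increasing filtration `Filt s` spanned by the
basis vectors of filtration level `≤ s`, and let `d` be the `𝔽₂`-linear map with
`d (e 0) = e 1 + e 2`, `d (e 1) = e 3`, `d (e 2) = e 3`, `d (e 3) = 0`.
Then there is a filtered change of basis `f` (with `f i` at filtration level `ℓ i`)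
such that `d (f 0) = f 1`, `d (f 2) = f 3`, the filtration gaps are
`ℓ 0 - ℓ 1 = ε₂` and `ℓ 2 - ℓ 3 = ε₂ = min ε₁ ε₂`, and `V` splits as the direct sum of
the two `d`-invariant filtered two-term subcomplexes `span {f 0, f 1}` and
`span {f 2, f 3}`. -/
theorem tensor_of_two_step_complexes
    {V : Type*} [AddCommGroup V] [Module (ZMod 2) V]
    (a₁ a₂ ε₁ ε₂ : ℝ) (hε₂ : 0 < ε₂) (hε : ε₂ ≤ ε₁)
    (e : Module.Basis (Fin 4) (ZMod 2) V)
    (ℓ : Fin 4 → ℝ)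
    (hℓ : ℓ = ![a₁ + a₂ + ε₁ + ε₂, a₁ + a₂ + ε₁, a₁ + a₂ + ε₂, a₁ + a₂])
    (Filt : ℝ → Submodule (ZMod 2) V)
    (hFilt : ∀ s : ℝ, Filt s = Submodule.span (ZMod 2) (⇑e '' {i : Fin 4 | ℓ i ≤ s}))
    (d : V →ₗ[ZMod 2] V)
    (hd0 : d (e 0) = e 1 + e 2) (hd1 : d (e 1) = e 3)
    (hd2 : d (e 2) = e 3) (hd3 : d (e 3) = 0) :
    ∃ f : Module.Basis (Fin 4) (ZMod 2) V,
      -- (i) the change of basis is filtered, `f i` having filtration level `ℓ i`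
      (∀ s : ℝ, Filt s = Submodule.span (ZMod 2) (⇑f '' {i : Fin 4 | ℓ i ≤ s})) ∧
      -- (ii) the differential pairs up the new basis
      d (f 0) = f 1 ∧ d (f 2) = f 3 ∧
      -- (iii) the filtration-level gaps both equal `ε₂ = min ε₁ ε₂`
      ℓ 0 - ℓ 1 = ε₂ ∧ ℓ 2 - ℓ 3 = ε₂ ∧ ε₂ = min ε₁ ε₂ ∧
      -- consequently, `V` splits as a direct sum of two `d`-invariant two-term
      -- filtered subcomplexes
      IsCompl (Submodule.span (ZMod 2) {f 0, f 1})
        (Submodule.span (ZMod 2) {f 2, f 3}) ∧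
      (∀ c ∈ Submodule.span (ZMod 2) ({f 0, f 1} : Set V),
        d c ∈ Submodule.span (ZMod 2) ({f 0, f 1} : Set V)) ∧
      (∀ c ∈ Submodule.span (ZMod 2) ({f 2, f 3} : Set V),
        d c ∈ Submodule.span (ZMod 2) ({f 2, f 3} : Set V)) :=
  tensor_of_two_step_complexes_general a₁ a₂ ε₁ ε₂ hε e ℓ hℓ Filt hFilt d hd0 hd1 hd2 hd3
end
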